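/- arXiv:2406.00950 — 2 statements merged into one kernel-verified Lean document; each statement's English description precedes it below -/
import Mathlib

section
/- If B : [t₀, T) → ℝ is twice continuously differentiable, B(t₀) > 0, B'(t₀) > 0, and B''(t)·B(t) ≥ ((4+ε)/4)·B'(t)² with B''(t) > 0 on [t₀, T) for some ε > 0, and if B(t) → ∞ is not attained (i.e., B is finite on all of [t₀,T)), then T ≤ t₀ + 4·B(t₀)/(ε·B'(t₀)). -/
theorem stmt_8 (t₀ T ε : ℝ) (hT : t₀ < T) (hε : 0 < ε)
    (B : ℝ → ℝ) (hB : ContDiffOn ℝ 2 B (Set.Ico t₀ T))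
    (hB0 : 0 < B t₀) (hB'0 : 0 < deriv B t₀)
    (hB''pos : ∀ t ∈ Set.Ico t₀ T, 0 < deriv (deriv B) t)
    (hconc : ∀ t ∈ Set.Ico t₀ T,
      ((4 + ε) / 4) * (deriv B t) ^ 2 ≤ deriv (deriv B) t * B t) :
    T ≤ t₀ + 4 * B t₀ / (ε * deriv B t₀) := by
  have ht₀ : t₀ ∈ Set.Ico t₀ T := ⟨le_refl _, hT⟩
  -- deriv B is (fully) differentiable at every point of Ico, since deriv (deriv B) ≠ 0 there
  have hB'd : ∀ t ∈ Set.Ico t₀ T, DifferentiableAt ℝ (deriv B) t := fun t ht =>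
    differentiableAt_of_deriv_ne_zero (ne_of_gt (hB''pos t ht))
  -- B is differentiable at every point of Ico
  have hBd : ∀ t ∈ Set.Ico t₀ T, DifferentiableAt ℝ B t := by
    intro t ht
    rcases eq_or_lt_of_le ht.1 with h | h
    · subst h; exact differentiableAt_of_deriv_ne_zero (ne_of_gt hB'0)
    · exact ((hB.differentiableOn (by norm_num) t ht).differentiableAt
        (Ico_mem_nhds h ht.2))
  have hcontB' : ContinuousOn (deriv B) (Set.Ico t₀ T) := fun t ht =>
    (hB'd t ht).continuousAt.continuousWithinAt
  -- deriv B is positive on Ico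
  have hB'mono : StrictMonoOn (deriv B) (Set.Ico t₀ T) := by
    apply strictMonoOn_of_deriv_pos (convex_Ico _ _) hcontB'
    intro x hx
    rw [interior_Ico] at hx
    exact hB''pos x (Set.Ioo_subset_Ico_self hx)
  have hB'pos : ∀ t ∈ Set.Ico t₀ T, 0 < deriv B t := by
    intro t ht
    rcases eq_or_lt_of_le ht.1 with h | h
    · subst h; exact hB'0
    · exact lt_trans hB'0 (hB'mono ht₀ ht h)
  -- B is positive on Ico
  have hBmono : StrictMonoOn B (Set.Ico t₀ T) := by
    apply strictMonoOn_of_deriv_pos (convex_Ico _ _) hB.continuousOn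
    intro x hx
    rw [interior_Ico] at hx
    exact hB'pos x (Set.Ioo_subset_Ico_self hx)
  have hBpos : ∀ t ∈ Set.Ico t₀ T, 0 < B t := by
    intro t ht
    rcases eq_or_lt_of_le ht.1 with h | h
    · subst h; exact hB0
    · exact lt_trans hB0 (hBmono ht₀ ht h)
  -- the auxiliary function g
  set g : ℝ → ℝ := fun s => B s / deriv B s + ε / 4 * s with hgdef
  have hgderiv : ∀ x ∈ Set.Ioo t₀ T, HasDerivAt g
      ((deriv B x * deriv B x - B x * deriv (deriv B) x) / (deriv B x) ^ 2 + ε / 4) x := by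
    intro x hx
    have hx' : x ∈ Set.Ico t₀ T := ⟨le_of_lt hx.1, hx.2⟩
    have h1 : HasDerivAt B (deriv B x) x := (hBd x hx').hasDerivAt
    have h2 : HasDerivAt (deriv B) (deriv (deriv B) x) x := (hB'd x hx').hasDerivAt
    have hdiv := h1.div h2 (ne_of_gt (hB'pos x hx'))
    have hlin : HasDerivAt (fun s : ℝ => ε / 4 * s) (ε / 4) x := by
      simpa using (hasDerivAt_id x).const_mul (ε / 4)
    exact hdiv.add hlin
  have hganti : AntitoneOn g (Set.Ico t₀ T) := by
    apply antitoneOn_of_deriv_nonpos (convex_Ico _ _)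
    · apply ContinuousOn.add
      · exact hB.continuousOn.div hcontB' (fun t ht => ne_of_gt (hB'pos t ht))
      · exact (continuous_const.mul continuous_id).continuousOn
    · intro x hx
      rw [interior_Ico] at hx
      exact (hgderiv x hx).differentiableAt.differentiableWithinAt
    · intro x hx
      rw [interior_Ico] at hx
      have hx' : x ∈ Set.Ico t₀ T := ⟨le_of_lt hx.1, hx.2⟩
      rw [(hgderiv x hx).deriv]
      have ha : 0 < deriv B x := hB'pos x hx'
      have hc := hconc x hx'
      have h2 : (deriv B x * deriv B x - B x * deriv (deriv B) x) / (deriv B x) ^ 2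
          ≤ -(ε / 4) := by
        rw [div_le_iff₀ (by positivity)]
        nlinarith
      linarith
  -- main bound for points in Ico
  have hmain : ∀ a ∈ Set.Ico t₀ T, a < t₀ + 4 * B t₀ / (ε * deriv B t₀) := by
    intro a ha
    have hga : g a ≤ g t₀ := hganti ht₀ ha ha.1
    have hpos : 0 < B a / deriv B a := div_pos (hBpos a ha) (hB'pos a ha)
    have h4 : ε / 4 * (a - t₀) < B t₀ / deriv B t₀ := by
      simp only [hgdef] at hga
      linarith
    have heq : 4 * B t₀ / (ε * deriv B t₀) = (4 / ε) * (B t₀ / deriv B t₀) := by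
      field_simp
    rw [heq]
    have : a - t₀ < (4 / ε) * (B t₀ / deriv B t₀) := by
      have h5 : ε / 4 * (a - t₀) * (4 / ε) < (B t₀ / deriv B t₀) * (4 / ε) := by
        apply mul_lt_mul_of_pos_right h4 (by positivity)
      calc a - t₀ = ε / 4 * (a - t₀) * (4 / ε) := by field_simp
        _ < (B t₀ / deriv B t₀) * (4 / ε) := h5
        _ = (4 / ε) * (B t₀ / deriv B t₀) := by ring
    linarith
  -- conclude
  apply le_of_forall_lt
  intro a haT
  rcases lt_or_ge a t₀ with h | h
  · have : t₀ < t₀ + 4 * B t₀ / (ε * deriv B t₀) := by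
      have : 0 < 4 * B t₀ / (ε * deriv B t₀) := by positivity
      linarith
    linarith
  · exact hmain a ⟨h, haT⟩
end

section
/- ODE comparison for blowup of the L² norm: let ε > 0, and suppose B : [t₀, T_max) → (0,∞) is C², B'(t₀) > 0, and B''(t)B(t) − ((4+ε)/4)B'(t)² > 0 together with B''(t) > 0 for all t ∈ (t₀, T_max), where [t₀, T_max) is the maximal interval on which B remains finite. If B(t) → ∞ as t → T_max⁻, then T_max < t₀ + 4B(t₀)/(ε·B'(t₀)). -/
/-!
With `c = -ε/4`, the function `y = B ^ c` has
`y'' = c B ^ (c - 2) (B'' B - (1 - c) B'²) < 0`, so `y` is positive and strictly concave on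
`[t₀, Tmax)`, while `y'(t₀) < 0`. A positive strictly concave function cannot outlive the zero
`t₀ - y(t₀)/y'(t₀) = t₀ + 4 B(t₀)/(ε B'(t₀))` of its tangent line at `t₀`.
-/

open Filter Set Topology

theorem StrictConcaveOn.lt_sub_div_of_pos {f : ℝ → ℝ} {a b f' : ℝ}
    (hf : StrictConcaveOn ℝ (Ico a b) f) (hpos : ∀ t ∈ Ico a b, 0 < f t) (hab : a < b)
    (hfa : HasDerivWithinAt f f' (Ico a b) a) (hf' : f' < 0) :
    b < a - f a / f' := by
  have ha : a ∈ Ico a b := ⟨le_rfl, hab⟩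
  obtain ⟨t₁, hat₁, ht₁b⟩ := exists_between hab
  have ht₁ : t₁ ∈ Ico a b := ⟨hat₁.le, ht₁b⟩
  set s := slope f a t₁
  have hs : s < f' := hf.slope_lt_of_hasDerivWithinAt ha ht₁ hat₁ hfa
  have hs0 : s < 0 := hs.trans hf'
  -- Beyond `t₁`, `f` lies below its secant through `a` and `t₁`, whose root thus bounds `b`;
  -- the gap `s < f'` makes the final bound strict.
  have hlt_root : ∀ t ∈ Ico t₁ b, t < a - f a / s := by
    intro t ht
    have hat : a < t := by linarith [ht.1]
    have hslope : slope f a t ≤ s :=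
      hf.concaveOn.antitoneOn_slope_gt ha ⟨ht₁, hat₁⟩ ⟨⟨hat.le, ht.2⟩, hat⟩ ht.1
    have hft : (t - a) * slope f a t = f t - f a := sub_smul_slope f a t
    have hsecant : 0 < f a + s * (t - a) := by
      nlinarith [hpos t ⟨hat.le, ht.2⟩]
    have hq : f a / s * s = f a := div_mul_cancel₀ _ hs0.ne
    nlinarith
  have hb : b ≤ a - f a / s := le_of_forall_lt_imp_le_of_dense fun t ht =>
    (le_max_left t t₁).trans (hlt_root _ ⟨le_max_right _ _, max_lt ht ht₁.2⟩).le
  calc b ≤ a - f a / s := hb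
    _ < a - f a / f' := by
      have := div_lt_div_of_pos_left (hpos a ha) (neg_pos.2 hf') (neg_lt_neg hs)
      rw [div_neg, div_neg] at this
      linarith

theorem deriv2_rpow_const_comp {B : ℝ → ℝ} {x : ℝ} (c : ℝ)
    (hB : ∀ᶠ y in 𝓝 x, DifferentiableAt ℝ B y) (hB' : DifferentiableAt ℝ (deriv B) x)
    (hx : 0 < B x) :
    deriv^[2] (fun y => B y ^ c) x =
      c * B x ^ (c - 2) * (deriv (deriv B) x * B x - (1 - c) * deriv B x ^ 2) := by
  have hderiv : deriv (fun y => B y ^ c) =ᶠ[𝓝 x] fun y => deriv B y * c * B y ^ (c - 1) := by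
    filter_upwards [hB, continuousAt_const.eventually_lt hB.self_of_nhds.continuousAt hx]
      with y hy hpos
    exact deriv_rpow_const hy (Or.inl hpos.ne')
  have hpow : HasDerivAt (fun y => B y ^ (c - 1))
      (deriv B x * (c - 1) * B x ^ (c - 1 - 1)) x :=
    hB.self_of_nhds.hasDerivAt.rpow_const (Or.inl hx.ne')
  have hprod : HasDerivAt (fun y => deriv B y * c * B y ^ (c - 1))
      (deriv (deriv B) x * c * B x ^ (c - 1) +
        deriv B x * c * (deriv B x * (c - 1) * B x ^ (c - 1 - 1))) x :=
    (hB'.hasDerivAt.mul_const c).mul hpow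
  rw [Function.iterate_succ_apply, Function.iterate_one, hderiv.deriv_eq, hprod.deriv,
    sub_sub, one_add_one_eq_two, Real.rpow_sub_one hx.ne', Real.rpow_sub hx, Real.rpow_two]
  field_simp
  ring

theorem strictConcaveOn_rpow_comp {D : Set ℝ} (hD : Convex ℝ D) {B : ℝ → ℝ} {c : ℝ}
    (hc : c < 0) (hcont : ContinuousOn B D) (hB : ContDiffOn ℝ 2 B (interior D))
    (hpos : ∀ x ∈ D, 0 < B x)
    (hineq : ∀ x ∈ interior D, 0 < deriv (deriv B) x * B x - (1 - c) * deriv B x ^ 2) :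
    StrictConcaveOn ℝ D fun x => B x ^ c := by
  refine strictConcaveOn_of_deriv2_neg hD (hcont.rpow_const fun x hx => Or.inl (hpos x hx).ne')
    fun x hx => ?_
  have hnhds : interior D ∈ 𝓝 x := isOpen_interior.mem_nhds hx
  have hdiff : DifferentiableOn ℝ B (interior D) := hB.differentiableOn two_ne_zero
  have hdiff' : DifferentiableOn ℝ (deriv B) (interior D) :=
    (hB.deriv_of_isOpen isOpen_interior (by norm_num)).differentiableOn one_ne_zero
  have hBx : 0 < B x := hpos x (interior_subset hx)
  rw [deriv2_rpow_const_comp c (eventually_of_mem hnhds fun y hy => hdiff.differentiableAt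
    (isOpen_interior.mem_nhds hy)) (hdiff'.differentiableAt hnhds) hBx]
  exact mul_neg_of_neg_of_pos (mul_neg_of_neg_of_pos hc (Real.rpow_pos_of_pos hBx _))
    (hineq x hx)

theorem stmt_19_general (t₀ Tmax ε : ℝ) (hT : t₀ < Tmax) (hε : 0 < ε)
    (B : ℝ → ℝ) (hB : ContDiffOn ℝ 2 B (Set.Ico t₀ Tmax))
    (hBpos : ∀ t ∈ Set.Ico t₀ Tmax, 0 < B t)
    (hB'0 : 0 < deriv B t₀)
    (hconc : ∀ t ∈ Set.Ioo t₀ Tmax,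
      0 < deriv (deriv B) t * B t - ((4 + ε) / 4) * (deriv B t) ^ 2) :
    Tmax < t₀ + 4 * B t₀ / (ε * deriv B t₀) := by
  set c := -(ε / 4) with hc
  have hc0 : c < 0 := by linarith
  have hB₀ : 0 < B t₀ := hBpos t₀ ⟨le_rfl, hT⟩
  have hconcave : StrictConcaveOn ℝ (Ico t₀ Tmax) fun t => B t ^ c :=
    strictConcaveOn_rpow_comp (convex_Ico t₀ Tmax) hc0 hB.continuousOn
      (by rw [interior_Ico]; exact hB.mono Ioo_subset_Ico_self) hBpos
      (by rw [interior_Ico]; intro t ht; convert hconc t ht using 3; ring)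
  have hderiv : HasDerivAt (fun t => B t ^ c) (deriv B t₀ * c * B t₀ ^ (c - 1)) t₀ :=
    (differentiableAt_of_deriv_ne_zero hB'0.ne').hasDerivAt.rpow_const (Or.inl hB₀.ne')
  have hlifespan := hconcave.lt_sub_div_of_pos (fun t ht => Real.rpow_pos_of_pos (hBpos t ht) c)
    hT hderiv.hasDerivWithinAt
    (mul_neg_of_neg_of_pos (mul_neg_of_pos_of_neg hB'0 hc0) (Real.rpow_pos_of_pos hB₀ _))
  convert hlifespan using 1
  rw [Real.rpow_sub_one hB₀.ne', hc]
  field_simp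
  ring

theorem stmt_19 (t₀ Tmax ε : ℝ) (hT : t₀ < Tmax) (hε : 0 < ε)
    (B : ℝ → ℝ) (hB : ContDiffOn ℝ 2 B (Set.Ico t₀ Tmax))
    (hBpos : ∀ t ∈ Set.Ico t₀ Tmax, 0 < B t)
    (hB'0 : 0 < deriv B t₀)
    (hB'' : ∀ t ∈ Set.Ioo t₀ Tmax, 0 < deriv (deriv B) t)
    (hconc : ∀ t ∈ Set.Ioo t₀ Tmax,
      0 < deriv (deriv B) t * B t - ((4 + ε) / 4) * (deriv B t) ^ 2)
    (hblow : Tendsto B (nhdsWithin Tmax (Set.Iio Tmax)) atTop) :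
    Tmax < t₀ + 4 * B t₀ / (ε * deriv B t₀) :=
  stmt_19_general t₀ Tmax ε hT hε B hB hBpos hB'0 hconc
end
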